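/- Let σ : [0,1] → [0,1] be an invertible bimeasurable map with σ'(t) ∈ {b·a^k : k ∈ ℤ} for a.e. t (some fixed b > 0, a > 1), let p ≥ 1, |h(t)|^p = σ'(t) a.e., and let ψ(x) = x^p·ψ̃(x) be an Orlicz function with ψ̃(a^{1/p}x) = ψ̃(x) for all x > 0. Then for every measurable f on [0,1], ‖h·(f∘σ)‖_ψ = ‖f‖_{ψ₁}, where ψ₁(x) = (1/b)·ψ(b^{1/p}x). -/

import Mathlib

/-!
Where `σ' = b·a^k` we have `|h| = b^{1/p}·(a^{1/p})^k`, and the invariance of `ψ̃` under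
multiplication by `a^{1/p}` lets it forget the factor `(a^{1/p})^k`; hence pointwise
`ψ(|h|·y) = |h|^p·y^p·ψ̃(b^{1/p}·y) = σ'·ψ₁(y)`. The change of variables `u = σ(t)` then turns
`∫ ψ(|h·(f∘σ)|/c)` into `∫ ψ₁(|f|/c)` for every `c > 0`, so both Luxemburg norms are infima of
the same set.
-/

open MeasureTheory Set

/-- The Luxemburg norm on `[0,1]` associated with an Orlicz function `ψ`. -/
noncomputable def luxNorm (ψ : ℝ → ℝ) (f : ℝ → ℝ) : ℝ :=
  sInf {c : ℝ | 0 < c ∧ ∫ x in Icc (0:ℝ) 1, ψ (|f x| / c) ≤ 1}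

theorem luxNorm_congr {ψ φ f g : ℝ → ℝ}
    (h : ∀ c, 0 < c → ∫ x in Icc (0:ℝ) 1, ψ (|f x| / c) = ∫ x in Icc (0:ℝ) 1, φ (|g x| / c)) :
    luxNorm ψ f = luxNorm φ g := by
  unfold luxNorm
  congr 1
  ext c
  exact and_congr_right fun hc => by rw [h c hc]

theorem MonotoneOn.measurable_comp_of_nonneg {α : Type*} [MeasurableSpace α] {ψ : ℝ → ℝ}
    {g : α → ℝ} (hψ : MonotoneOn ψ (Ici 0)) (hg : Measurable g) (hg0 : ∀ x, 0 ≤ g x) :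
    Measurable fun x => ψ (g x) := by
  have hmono : Monotone fun y => ψ (max y 0) := fun y₁ y₂ hy =>
    hψ (mem_Ici.2 (le_max_right _ _)) (mem_Ici.2 (le_max_right _ _)) (max_le_max hy le_rfl)
  have hcomp : (fun x => ψ (g x)) = (fun y => ψ (max y 0)) ∘ g :=
    funext fun x => by rw [Function.comp_apply, max_eq_left (hg0 x)]
  exact hcomp ▸ hmono.measurable.comp hg

theorem apply_zpow_mul_eq_of_apply_mul_eq {φ : ℝ → ℝ} {q : ℝ} (hq : 0 < q)
    (hφ : ∀ x, 0 < x → φ (q * x) = φ x) (k : ℤ) {x : ℝ} (hx : 0 < x) :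
    φ (q ^ k * x) = φ x := by
  induction k using Int.induction_on generalizing x with
  | zero => simp
  | succ n ih =>
    rw [zpow_add_one₀ hq.ne', mul_comm _ q, mul_assoc, hφ _ (by positivity), ih hx]
  | pred n ih =>
    have hφ' : φ (q⁻¹ * x) = φ x := by
      simpa only [mul_inv_cancel_left₀ hq.ne'] using (hφ (q⁻¹ * x) (by positivity)).symm
    rw [zpow_sub_one₀ hq.ne', mul_assoc, ih (by positivity), hφ']

theorem eq_rpow_inv_mul_zpow_of_rpow_eq {r a b p : ℝ} (ha : 0 < a) (hb : 0 < b) (hp : p ≠ 0)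
    (hr : 0 ≤ r) {k : ℤ} (hrk : r ^ p = b * a ^ k) :
    r = b ^ (1 / p) * (a ^ (1 / p)) ^ k := by
  rw [← Real.rpow_rpow_inv hr hp, hrk, ← one_div, Real.mul_rpow hb.le (by positivity),
    ← Real.rpow_intCast a k, ← Real.rpow_intCast (a ^ (1 / p)) k, ← Real.rpow_mul ha.le,
    ← Real.rpow_mul ha.le, mul_comm (k : ℝ), mul_comm]

theorem orlicz_mul_eq_of_rpow_eq_mul_zpow {ψ ψt : ℝ → ℝ} {a b p r y : ℝ} (ha : 0 < a)
    (hb : 0 < b) (hp : p ≠ 0) (hψ0 : ψ 0 = 0) (hψ : ∀ x : ℝ, 0 < x → ψ x = x ^ p * ψt x)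
    (hper : ∀ x : ℝ, 0 < x → ψt (a ^ (1 / p) * x) = ψt x) (hr : 0 ≤ r) (hy : 0 ≤ y) {k : ℤ}
    (hrk : r ^ p = b * a ^ k) :
    ψ (r * y) = 1 / b * ψ (b ^ (1 / p) * y) * r ^ p := by
  rcases hy.eq_or_lt with rfl | hy
  · simp [hψ0]
  have hr_eq := eq_rpow_inv_mul_zpow_of_rpow_eq ha hb hp hr hrk
  have hr_pos : 0 < r := hr_eq ▸ by positivity
  have hby : 0 < b ^ (1 / p) * y := by positivity
  have hψt : ψt (r * y) = ψt (b ^ (1 / p) * y) := by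
    rw [show r * y = (a ^ (1 / p)) ^ k * (b ^ (1 / p) * y) by rw [hr_eq]; ring]
    exact apply_zpow_mul_eq_of_apply_mul_eq (by positivity) hper k hby
  have hbp : (b ^ (1 / p)) ^ p = b := by rw [one_div, Real.rpow_inv_rpow hb.le hp]
  rw [hψ _ (mul_pos hr_pos hy), hψ _ hby, hψt, Real.mul_rpow hr hy.le,
    Real.mul_rpow (by positivity) hy.le, hbp]
  field_simp

theorem setIntegral_orlicz_weighted_comp {σ sd h f ψ ψt : ℝ → ℝ} {a b p c : ℝ} (ha : 0 < a)
    (hb : 0 < b) (hp : p ≠ 0) (hf : Measurable f) (hc : 0 ≤ c)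
    (hcv : ∀ g : ℝ → ℝ, Measurable g →
      ∫ t in Icc (0:ℝ) 1, g (σ t) * sd t = ∫ u in Icc (0:ℝ) 1, g u)
    (hsd : ∀ᵐ t ∂(volume.restrict (Icc (0:ℝ) 1)), ∃ k : ℤ, sd t = b * a ^ k)
    (hh : ∀ᵐ t ∂(volume.restrict (Icc (0:ℝ) 1)), |h t| ^ p = sd t)
    (hψmono : MonotoneOn ψ (Ici 0)) (hψ0 : ψ 0 = 0) (hψ : ∀ x : ℝ, 0 < x → ψ x = x ^ p * ψt x)
    (hper : ∀ x : ℝ, 0 < x → ψt (a ^ (1 / p) * x) = ψt x) :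
    ∫ t in Icc (0:ℝ) 1, ψ (|h t * f (σ t)| / c) =
      ∫ u in Icc (0:ℝ) 1, 1 / b * ψ (b ^ (1 / p) * (|f u| / c)) := by
  set g : ℝ → ℝ := fun u => 1 / b * ψ (b ^ (1 / p) * (|f u| / c))
  have hg : Measurable g := measurable_const.mul <|
    hψmono.measurable_comp_of_nonneg (measurable_const.mul (hf.abs.div_const c))
      fun _ => by positivity
  rw [← hcv g hg]
  refine integral_congr_ae ?_
  filter_upwards [hsd, hh] with t ⟨k, hk⟩ hht
  rw [abs_mul, mul_div_assoc, orlicz_mul_eq_of_rpow_eq_mul_zpow ha hb hp hψ0 hψ hper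
    (abs_nonneg _) (by positivity) (hht.trans hk), hht]

theorem stmt_19_general (σ sd h : ℝ → ℝ) (a b p : ℝ)
    (ha : 1 < a) (hb : 0 < b) (hp : 1 ≤ p)
    -- `sd = σ'` is the Radon–Nikodym derivative of `σ`: change of variables
    (hcv : ∀ g : ℝ → ℝ, Measurable g →
      ∫ t in Icc (0:ℝ) 1, g (σ t) * sd t = ∫ u in Icc (0:ℝ) 1, g u)
    (hsd : ∀ᵐ t ∂(volume.restrict (Icc (0:ℝ) 1)), ∃ k : ℤ, sd t = b * a ^ k)
    (hh : ∀ᵐ t ∂(volume.restrict (Icc (0:ℝ) 1)), |h t| ^ p = sd t)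
    (ψ ψt : ℝ → ℝ)
    (hψmono : MonotoneOn ψ (Ici 0)) (hψ0 : ψ 0 = 0)
    (hψ : ∀ x : ℝ, 0 < x → ψ x = x ^ p * ψt x)
    (hper : ∀ x : ℝ, 0 < x → ψt (a ^ (1/p) * x) = ψt x) :
    ∀ f : ℝ → ℝ, Measurable f →
      luxNorm ψ (fun t => h t * f (σ t)) =
      luxNorm (fun x => (1/b) * ψ (b ^ (1/p) * x)) f := by
  intro f hf
  exact luxNorm_congr fun c hc => setIntegral_orlicz_weighted_comp (by linarith) hb
    (by positivity) hf hc.le hcv hsd hh hψmono hψ0 hψ hper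

/-- let `σ` be an invertible bimeasurable map of `[0,1]` whose
Radon–Nikodym derivative `σ'` takes values in `{b·a^k : k ∈ ℤ}` a.e., let `p ≥ 1`,
`|h|^p = σ'` a.e., and let `ψ(x) = x^p ψ̃(x)` be an Orlicz function with
`ψ̃(a^{1/p} x) = ψ̃(x)`. Then `‖h·(f∘σ)‖_ψ = ‖f‖_{ψ₁}` for every measurable `f`,
where `ψ₁(x) = (1/b) ψ(b^{1/p} x)`. -/
theorem stmt_19 (σ σinv sd h : ℝ → ℝ) (a b p : ℝ)
    (ha : 1 < a) (hb : 0 < b) (hp : 1 ≤ p)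
    (hσmeas : Measurable σ) (hσinvmeas : Measurable σinv) (hhmeas : Measurable h)
    (hmaps : MapsTo σ (Icc (0:ℝ) 1) (Icc (0:ℝ) 1))
    (hinv1 : ∀ t ∈ Icc (0:ℝ) 1, σinv (σ t) = t)
    (hinv2 : ∀ t ∈ Icc (0:ℝ) 1, σ (σinv t) = t)
    -- `sd = σ'` is the Radon–Nikodym derivative of `σ`: change of variables
    (hcv : ∀ g : ℝ → ℝ, Measurable g →
      ∫ t in Icc (0:ℝ) 1, g (σ t) * sd t = ∫ u in Icc (0:ℝ) 1, g u)
    (hsd : ∀ᵐ t ∂(volume.restrict (Icc (0:ℝ) 1)), ∃ k : ℤ, sd t = b * a ^ k)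
    (hh : ∀ᵐ t ∂(volume.restrict (Icc (0:ℝ) 1)), |h t| ^ p = sd t)
    (ψ ψt : ℝ → ℝ)
    (hψconv : ConvexOn ℝ (Ici 0) ψ) (hψmono : MonotoneOn ψ (Ici 0)) (hψ0 : ψ 0 = 0)
    (hψ : ∀ x : ℝ, 0 < x → ψ x = x ^ p * ψt x)
    (hper : ∀ x : ℝ, 0 < x → ψt (a ^ (1/p) * x) = ψt x) :
    ∀ f : ℝ → ℝ, Measurable f →
      luxNorm ψ (fun t => h t * f (σ t)) =
      luxNorm (fun x => (1/b) * ψ (b ^ (1/p) * x)) f :=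
  stmt_19_general σ sd h a b p ha hb hp hcv hsd hh ψ ψt hψmono hψ0 hψ hper
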